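/- For all positive integers s, r with r ≥ s ≥ 2 and r > 2s − 2, the minimum n such that every 2-coloring of [1,n] admits monochromatic subsets S₁, S₂ with |S₁| = s, |S₂| = r, max(S₁) < min(S₂), and diam(S₁) ≤ diam(S₂), equals 2s + 2r − 2. -/

import Mathlib

open Finset

/-- diameter of a finite set of naturals -/
def diam (S : Finset ℕ) : ℕ := (S.max.getD 0) - (S.min.getD 0)

/-- S is monochromatic under a coloring -/
def Mono {α : Type*} (f : ℕ → α) (S : Finset ℕ) : Prop := ∀ a ∈ S, ∀ b ∈ S, f a = f b

/-- S is zero-sum mod m under an integer coloring -/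
def ZeroSum (f : ℕ → ℤ) (m : ℕ) (S : Finset ℕ) : Prop := (m : ℤ) ∣ ∑ x ∈ S, f x

/-- every element of S colored ∞ (= none) -/
def InftyMono (f : ℕ → Option ℤ) (S : Finset ℕ) : Prop := ∀ x ∈ S, f x = none

/-- S consists of ℤ-colored elements and is zero-sum mod m -/
def ZeroSumOpt (f : ℕ → Option ℤ) (m : ℕ) (S : Finset ℕ) : Prop :=
  (∀ x ∈ S, (f x).isSome) ∧ (m : ℤ) ∣ ∑ x ∈ S, (f x).getD 0

/-!
Upper bound: by pigeonhole, `[1, 2s-1]` contains a monochromatic `s`-set, of diameter at most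
`2s-2`, and `[2s, 2s+2r-2]` a monochromatic `r`-set, of diameter at least `r-1 ≥ 2s-2`.

Lower bound: colour `[1, 2s+2r-3]` by the blocks `[1, s-1]`, `[s, 2s-2]`, `[2s-1, 2s+r-2]`,
`[2s+r-1, 2s+2r-3]` alternately `0, 1, 0, 1`. Every monochromatic `r`-set must meet `[1, 2s-1]`,
so the `s`-set below it lies in `[1, 2s-2]`, whose two blocks have only `s-1` elements each.
-/

lemma diam_eq_max'_sub_min' {S : Finset ℕ} (h : S.Nonempty) : diam S = S.max' h - S.min' h := by
  rw [diam, ← coe_max' h, ← coe_min' h]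
  rfl

lemma diam_le_of_subset_Icc {S : Finset ℕ} {a b : ℕ} (hS : S ⊆ Icc a b) : diam S ≤ b - a := by
  rcases S.eq_empty_or_nonempty with rfl | h
  · simp only [diam, max_empty, min_empty]
    exact Nat.zero_le _
  · have hmax := mem_Icc.mp (hS (S.max'_mem h))
    have hmin := mem_Icc.mp (hS (S.min'_mem h))
    rw [diam_eq_max'_sub_min' h]
    omega

lemma card_le_diam_add_one {S : Finset ℕ} (h : S.Nonempty) : #S ≤ diam S + 1 := by
  have hsub : S ⊆ Icc (S.min' h) (S.max' h) := fun x hx =>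
    mem_Icc.mpr ⟨min'_le _ _ hx, le_max' _ _ hx⟩
  have hcard := card_le_card hsub
  have hle := S.min'_le_max' h
  rw [Nat.card_Icc] at hcard
  rw [diam_eq_max'_sub_min' h]
  omega

lemma exists_mono_subset_card_eq {α : Type*} [Fintype α] [DecidableEq α] (Δ : ℕ → α)
    {T : Finset ℕ} {k : ℕ} (hT : Fintype.card α * (k - 1) < #T) :
    ∃ S ⊆ T, #S = k ∧ Mono Δ S := by
  obtain ⟨c, -, hc⟩ := exists_lt_card_fiber_of_mul_lt_card_of_maps_to
    (fun a _ => mem_univ (Δ a)) (by rwa [card_univ])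
  obtain ⟨S, hST, hcard⟩ := exists_subset_card_eq (show k ≤ #{x ∈ T | Δ x = c} by omega)
  refine ⟨S, hST.trans (filter_subset _ _), hcard, fun a ha b hb => ?_⟩
  rw [(mem_filter.mp (hST ha)).2, (mem_filter.mp (hST hb)).2]

def MonoDiamPair {α : Type*} (Δ : ℕ → α) (s r n : ℕ) : Prop :=
  ∃ S₁ S₂ : Finset ℕ, S₁ ⊆ Icc 1 n ∧ S₂ ⊆ Icc 1 n ∧
    Mono Δ S₁ ∧ Mono Δ S₂ ∧ #S₁ = s ∧ #S₂ = r ∧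
    (∀ a ∈ S₁, ∀ b ∈ S₂, a < b) ∧ diam S₁ ≤ diam S₂

lemma monoDiamPair_two_mul_add_two_mul_sub_two (Δ : ℕ → Fin 2) {s r : ℕ} (hs : 0 < s)
    (hr : 2 * s - 2 < r) : MonoDiamPair Δ s r (2 * s + 2 * r - 2) := by
  obtain ⟨S₁, hS₁, hcard₁, hmono₁⟩ := exists_mono_subset_card_eq Δ (T := Icc 1 (2 * s - 1))
    (k := s) (by simp only [Fintype.card_fin, Nat.card_Icc]; omega)
  obtain ⟨S₂, hS₂, hcard₂, hmono₂⟩ := exists_mono_subset_card_eq Δ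
    (T := Icc (2 * s) (2 * s + 2 * r - 2)) (k := r)
    (by simp only [Fintype.card_fin, Nat.card_Icc]; omega)
  refine ⟨S₁, S₂, hS₁.trans (Icc_subset_Icc le_rfl (by omega)),
    hS₂.trans (Icc_subset_Icc (by omega) le_rfl), hmono₁, hmono₂, hcard₁, hcard₂, ?_, ?_⟩
  · intro a ha b hb
    have := mem_Icc.mp (hS₁ ha)
    have := mem_Icc.mp (hS₂ hb)
    omega
  · have hdiam₁ := diam_le_of_subset_Icc hS₁
    have hdiam₂ := card_le_diam_add_one (S := S₂) (card_pos.mp (by omega))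
    omega

def lowerBoundColoring (s r : ℕ) (i : ℕ) : Fin 2 :=
  if s ≤ i ∧ i ≤ 2 * s - 2 ∨ 2 * s + r - 1 ≤ i then 1 else 0

lemma lowerBoundColoring_eq_one_iff {s r i : ℕ} :
    lowerBoundColoring s r i = 1 ↔ s ≤ i ∧ i ≤ 2 * s - 2 ∨ 2 * s + r - 1 ≤ i := by
  unfold lowerBoundColoring
  split_ifs with h
  · exact iff_of_true rfl h
  · exact iff_of_false (by decide) h

lemma lowerBoundColoring_eq_zero_iff {s r i : ℕ} :
    lowerBoundColoring s r i = 0 ↔ ¬(s ≤ i ∧ i ≤ 2 * s - 2 ∨ 2 * s + r - 1 ≤ i) := by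
  rw [← lowerBoundColoring_eq_one_iff]
  omega

lemma Fin.eq_zero_or_eq_one (c : Fin 2) : c = 0 ∨ c = 1 := by
  omega

lemma not_mono_card_eq_of_subset_Icc_one_two_mul_sub_two {s r : ℕ} (hs : 0 < s) {S : Finset ℕ}
    (hS : S ⊆ Icc 1 (2 * s - 2)) (hmono : Mono (lowerBoundColoring s r) S) (hcard : #S = s) :
    False := by
  obtain ⟨x, hx⟩ := card_pos.mp (hcard ▸ hs)
  suffices ∃ a, S ⊆ Ico a (a + s - 1) by
    obtain ⟨a, ha⟩ := this
    have := card_le_card ha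
    rw [hcard, Nat.card_Ico] at this
    omega
  rcases Fin.eq_zero_or_eq_one (lowerBoundColoring s r x) with hc | hc
  · refine ⟨1, fun a ha => ?_⟩
    have := lowerBoundColoring_eq_zero_iff.mp ((hmono a ha x hx).trans hc)
    have := mem_Icc.mp (hS ha)
    rw [mem_Ico]
    omega
  · refine ⟨s, fun a ha => ?_⟩
    have := lowerBoundColoring_eq_one_iff.mp ((hmono a ha x hx).trans hc)
    have := mem_Icc.mp (hS ha)
    rw [mem_Ico]
    omega

lemma exists_mem_le_of_mono_card_eq {s r : ℕ} (hr : 0 < r) {S : Finset ℕ}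
    (hS : S ⊆ Icc 1 (2 * s + 2 * r - 3)) (hmono : Mono (lowerBoundColoring s r) S)
    (hcard : #S = r) : ∃ b ∈ S, b ≤ 2 * s - 1 := by
  by_contra! hlarge
  obtain ⟨x, hx⟩ := card_pos.mp (hcard ▸ hr)
  suffices ∃ a, S ⊆ Ico a (a + r - 1) by
    obtain ⟨a, ha⟩ := this
    have := card_le_card ha
    rw [hcard, Nat.card_Ico] at this
    omega
  rcases Fin.eq_zero_or_eq_one (lowerBoundColoring s r x) with hc | hc
  · refine ⟨2 * s, fun a ha => ?_⟩
    have := lowerBoundColoring_eq_zero_iff.mp ((hmono a ha x hx).trans hc)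
    have := hlarge a ha
    rw [mem_Ico]
    omega
  · refine ⟨2 * s + r - 1, fun a ha => ?_⟩
    have := lowerBoundColoring_eq_one_iff.mp ((hmono a ha x hx).trans hc)
    have := hlarge a ha
    have := mem_Icc.mp (hS ha)
    rw [mem_Ico]
    omega

lemma not_monoDiamPair_lowerBoundColoring {s r n : ℕ} (hs : 0 < s) (hr : 0 < r)
    (hn : n < 2 * s + 2 * r - 2) : ¬MonoDiamPair (lowerBoundColoring s r) s r n := by
  rintro ⟨S₁, S₂, hS₁, hS₂, hmono₁, hmono₂, hcard₁, hcard₂, hlt, -⟩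
  obtain ⟨b, hb, hble⟩ := exists_mem_le_of_mono_card_eq hr
    (hS₂.trans (Icc_subset_Icc le_rfl (by omega))) hmono₂ hcard₂
  refine not_mono_card_eq_of_subset_Icc_one_two_mul_sub_two hs (fun a ha => ?_) hmono₁ hcard₁
  have := mem_Icc.mp (hS₁ ha)
  have := hlt a ha b hb
  rw [mem_Icc]
  omega

theorem stmt1_general (s r : ℕ) (hs : 2 ≤ s) (hr : 2 * s - 2 < r) :
    IsLeast {n : ℕ | ∀ Δ : ℕ → Fin 2, ∃ S₁ S₂ : Finset ℕ,
    S₁ ⊆ Finset.Icc 1 n ∧ S₂ ⊆ Finset.Icc 1 n ∧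
    Mono Δ S₁ ∧ Mono Δ S₂ ∧ S₁.card = s ∧ S₂.card = r ∧
    (∀ a ∈ S₁, ∀ b ∈ S₂, a < b) ∧ diam S₁ ≤ diam S₂} (2 * s + 2 * r - 2) := by
  refine ⟨fun Δ => monoDiamPair_two_mul_add_two_mul_sub_two Δ (by omega) hr, fun n hn => ?_⟩
  by_contra! hlt
  exact not_monoDiamPair_lowerBoundColoring (by omega) (by omega) hlt (hn _)

theorem stmt1 (s r : ℕ) (hs : 2 ≤ s) (hsr : s ≤ r) (hr : 2 * s - 2 < r) :
    IsLeast {n : ℕ | ∀ Δ : ℕ → Fin 2, ∃ S₁ S₂ : Finset ℕ,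
    S₁ ⊆ Finset.Icc 1 n ∧ S₂ ⊆ Finset.Icc 1 n ∧
    Mono Δ S₁ ∧ Mono Δ S₂ ∧ S₁.card = s ∧ S₂.card = r ∧
    (∀ a ∈ S₁, ∀ b ∈ S₂, a < b) ∧ diam S₁ ≤ diam S₂} (2 * s + 2 * r - 2) :=
  stmt1_general s r hs hr
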